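/- arXiv:1706.01538 — 4 statements merged into one kernel-verified Lean document; each statement's English description precedes it below -/
import Mathlib

section
/- For all complex z, E_{1/2,1}(z) = e^{z²} · erfc(−z), where erfc is the complementary error function. -/
open scoped Real

/-- The two-parameter Mittag-Leffler function `E_{α,β}(z) = ∑ z^k / Γ(αk+β)`. -/
noncomputable def mittagLeffler (α : ℝ) (β : ℂ) (z : ℂ) : ℂ :=
  ∑' k : ℕ, z ^ k * (Complex.Gamma ((α : ℂ) * k + β))⁻¹

/-- The complementary error function `erfc(z) = 1 - erf(z)`, extended to an entire
function of `z ∈ ℂ` via the power series of the error function: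
`erf(z) = (2/√π) ∑ (-1)^n z^(2n+1) / (n! (2n+1))`. -/
noncomputable def erfc (z : ℂ) : ℂ :=
  1 - (2 / (Real.sqrt π : ℂ)) *
    ∑' n : ℕ, (-1) ^ n * z ^ (2 * n + 1) / ((n.factorial : ℂ) * (2 * n + 1))

/-!
Split the series of `E_{1/2,1}` into even and odd powers. The even part `∑ z^{2n}/n!` is
`e^{z²}`. The odd part `∑ z^{2n+1}/Γ(n+3/2)` is the Cauchy product of the series of `e^{z²}`
and of `(√π/2) erf z`: its coefficients reduce to the finite Beta-function identity
`∑_j (-1)^j C(k,j)/(a+j) = k! Γ(a)/Γ(a+k+1)` at `a = 1/2`. Since `erfc(-z) = 1 + erf z`,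
the two parts add up to `e^{z²} erfc(-z)`.
-/

open Finset Nat Complex

theorem Finset.sum_neg_one_pow_mul_choose_succ_mul {R : Type*} [CommRing R] (f : ℕ → R)
    (k : ℕ) :
    ∑ n ∈ range (k + 2), (-1) ^ n * ((k + 1).choose n : R) * f n =
      ∑ n ∈ range (k + 1), (-1) ^ n * (k.choose n : R) * (f n - f (n + 1)) := by
  have pascal := sum_choose_succ_mul (fun i _ => (-1 : R) ^ i * f i) k
  ring_nf at pascal ⊢
  rw [pascal, sum_sub_distrib, sum_neg_distrib, sub_eq_add_neg]

theorem Complex.sum_neg_one_pow_mul_choose_mul_inv_add (k : ℕ) {a : ℂ}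
    (ha : ∀ m : ℕ, a ≠ -m) :
    ∑ n ∈ range (k + 1), (-1) ^ n * (k.choose n : ℂ) * (a + n)⁻¹ =
      k ! * Gamma a / Gamma (a + k + 1) := by
  have h0 : a ≠ 0 := by simpa using ha 0
  induction k generalizing a with
  | zero => simp [Gamma_add_one a h0, div_mul_cancel_right₀ (Gamma_ne_zero ha)]
  | succ k ih =>
    have ha' : ∀ m : ℕ, a + 1 ≠ -m := fun m h =>
      ha (m + 1) (by push_cast; linear_combination h)
    have hk : a + k + 1 ≠ 0 := fun h => ha (k + 1) (by push_cast; linear_combination h)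
    have hΓ : Gamma (a + k + 1) ≠ 0 :=
      Gamma_ne_zero fun m h => ha (m + k + 1) (by push_cast; linear_combination h)
    have hshift (n : ℕ) : a + ((n + 1 : ℕ) : ℂ) = a + 1 + n := by push_cast; ring
    -- Pascal's rule: the sum at `k + 1` is the sum at `a` minus the sum at `a + 1`.
    rw [sum_neg_one_pow_mul_choose_succ_mul]
    simp only [mul_sub, sum_sub_distrib, hshift, ih ha h0, ih ha' (by simpa using ha' 0)]
    rw [Gamma_add_one a h0, show a + 1 + k + 1 = a + k + 1 + 1 by ring, Gamma_add_one _ hk]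
    push_cast [factorial_succ]
    field_simp
    ring

theorem Complex.Gamma_one_half_eq_sqrt : Gamma (1 / 2) = (√π : ℂ) := by
  rw [← Real.Gamma_one_half_eq, ← Gamma_ofReal]
  push_cast; rfl

theorem erfSeries_mul_expSeries_coeff (z : ℂ) (k : ℕ) :
    ∑ j ∈ range (k + 1), (-1) ^ j * z ^ (2 * j + 1) / (j ! * (2 * j + 1)) *
        ((z ^ 2) ^ (k - j) / (k - j)!) =
      √π / 2 * (z ^ (2 * k + 1) / Gamma (k + 3 / 2)) := by
  have hterm : ∀ j ∈ range (k + 1), (-1) ^ j * z ^ (2 * j + 1) / (j ! * (2 * j + 1)) *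
      ((z ^ 2) ^ (k - j) / (k - j)!) =
        z ^ (2 * k + 1) / (2 * k !) *
          ((-1) ^ j * (k.choose j : ℂ) * (1 / 2 + (j : ℂ))⁻¹) := by
    intro j hj
    have hjk : j ≤ k := Nat.lt_succ_iff.mp (mem_range.mp hj)
    have hpow : z ^ (2 * j + 1) * (z ^ 2) ^ (k - j) = z ^ (2 * k + 1) := by
      rw [← pow_mul, ← pow_add]; congr 1; omega
    have h2j : (2 * j + 1 : ℂ) ≠ 0 := by exact_mod_cast (2 * j).succ_ne_zero
    rw [Nat.cast_choose ℂ hjk, ← hpow, show 1 / 2 + (j : ℂ) = (2 * j + 1) / 2 by ring,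
      inv_div]
    field_simp [factorial_ne_zero]
  have hhalf : ∀ m : ℕ, (1 / 2 : ℂ) ≠ -m := fun m h => by
    have := congrArg re h
    norm_num at this
    linarith [(m.cast_nonneg : (0 : ℝ) ≤ m)]
  rw [sum_congr rfl hterm, ← mul_sum, sum_neg_one_pow_mul_choose_mul_inv_add k hhalf,
    show (1 / 2 + k + 1 : ℂ) = k + 3 / 2 by ring, Gamma_one_half_eq_sqrt]
  field_simp [factorial_ne_zero]

theorem summable_norm_erfSeries (z : ℂ) :
    Summable fun n : ℕ => ‖(-1) ^ n * z ^ (2 * n + 1) / (n ! * (2 * n + 1))‖ := by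
  refine .of_nonneg_of_le (fun _ => norm_nonneg _) (fun n => ?_)
    ((Real.summable_pow_div_factorial (‖z‖ ^ 2)).mul_left ‖z‖)
  have hnorm : ‖(-1) ^ n * z ^ (2 * n + 1) / (n ! * (2 * n + 1))‖ =
      ‖z‖ * (‖z‖ ^ 2) ^ n / n ! / (2 * n + 1) := by
    rw [show (2 * n + 1 : ℂ) = ((2 * n + 1 : ℕ) : ℂ) by push_cast; ring]
    simp only [norm_div, norm_mul, norm_pow, norm_neg, norm_one, one_pow, one_mul,
      Complex.norm_natCast]
    push_cast
    rw [div_div]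
    ring
  rw [hnorm, mul_div_assoc]
  exact div_le_self (by positivity) (by linarith [(n.cast_nonneg : (0 : ℝ) ≤ n)])

theorem hasSum_pow_two_mul_add_one_div_Gamma (z : ℂ) :
    HasSum (fun n : ℕ => z ^ (2 * n + 1) / Gamma (n + 3 / 2))
      ((2 / (√π : ℂ) * ∑' n : ℕ, (-1) ^ n * z ^ (2 * n + 1) / (n ! * (2 * n + 1))) *
        exp (z ^ 2)) := by
  have hexp : HasSum (fun n : ℕ => (z ^ 2) ^ n / n !) (exp (z ^ 2)) := by
    rw [exp_eq_exp_ℂ]; exact NormedSpace.expSeries_div_hasSum_exp _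
  have hprod := hasSum_sum_range_mul_of_summable_norm (summable_norm_erfSeries z)
    (NormedSpace.norm_expSeries_div_summable (z ^ 2))
  rw [hexp.tsum_eq] at hprod
  simp only [erfSeries_mul_expSeries_coeff] at hprod
  have hπ : (√π : ℂ) ≠ 0 := by exact_mod_cast (Real.sqrt_pos.mpr Real.pi_pos).ne'
  rw [mul_assoc]
  refine (hprod.mul_left (2 / (√π : ℂ))).congr_fun fun n => ?_
  field_simp

theorem erfc_neg (z : ℂ) :
    erfc (-z) =
      1 + 2 / (√π : ℂ) * ∑' n : ℕ, (-1) ^ n * z ^ (2 * n + 1) / (n ! * (2 * n + 1)) := by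
  simp only [erfc, Odd.neg_pow (odd_two_mul_add_one _), mul_neg, neg_div, tsum_neg]
  ring

theorem mittagLeffler_half_one (z : ℂ) :
    mittagLeffler (1 / 2) 1 z = Complex.exp (z ^ 2) * erfc (-z) := by
  set f : ℕ → ℂ := fun k => z ^ k * (Gamma (((1 / 2 : ℝ) : ℂ) * k + 1))⁻¹
  have heven : HasSum (fun n => f (2 * n)) (exp (z ^ 2)) := by
    rw [exp_eq_exp_ℂ]
    refine (NormedSpace.expSeries_div_hasSum_exp (z ^ 2)).congr_fun fun n => ?_
    dsimp only [f]
    rw [show ((1 / 2 : ℝ) : ℂ) * (2 * n : ℕ) + 1 = n + 1 by push_cast; ring,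
      Gamma_nat_eq_factorial, pow_mul, div_eq_mul_inv]
  have hodd : HasSum (fun n => f (2 * n + 1)) _ :=
    (hasSum_pow_two_mul_add_one_div_Gamma z).congr_fun fun n => by
      dsimp only [f]
      rw [show ((1 / 2 : ℝ) : ℂ) * (2 * n + 1 : ℕ) + 1 = n + 3 / 2 by push_cast; ring,
        ← div_eq_mul_inv]
  rw [mittagLeffler, (heven.even_add_odd hodd).tsum_eq, erfc_neg]
  ring
end

section
/- For every m ∈ ℕ and all z ∈ ℂ, the m-th derivative of the Mittag-Leffler function satisfies (d/dz)^m E_{α,β}(z) = m! · E^{m+1}_{α,β+αm}(z). -/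
/-!
`E_{α,β}` is the sum of the power series with coefficients `1 / Γ(αk + β)`, and this series is
entire: `1 / Γ` is bounded on the segment `1 ≤ Re w ≤ 2, Im w = Im β`, and
`Γ(w + n) = Γ(w) (w)_n` with `‖(w)_n‖ ≥ n!` when `Re w ≥ 1`, so `1 / Γ(αk + β)` decays like the
reciprocal of a factorial of size `≍ αk`. Differentiating termwise `m` times gives the
coefficients `(k + 1) ⋯ (k + m) / Γ(α(k + m) + β)`, and
`m! (m + 1)_k = (k + m)! = k! (k + 1) ⋯ (k + m)` identifies the result with `m! E^{m+1}_{α, β+αm}`.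
-/

open scoped Real

/-- The generalized Mittag-Leffler (Prabhakar) function
`E^ρ_{α,β}(z) = ∑ (ρ)_k z^k / (Γ(αk+β) k!)`. -/
noncomputable def prabhakar (ρ : ℂ) (α : ℝ) (β : ℂ) (z : ℂ) : ℂ :=
  ∑' k : ℕ, (ascPochhammer ℂ k).eval ρ * z ^ k *
    ((Complex.Gamma ((α : ℂ) * k + β))⁻¹ / (k.factorial : ℂ))

open Complex Filter Topology Nat FormalMultilinearSeries

section PowerSeries

variable {𝕜 : Type*} [NontriviallyNormedField 𝕜] [CompleteSpace 𝕜]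
  {f : 𝕜 → 𝕜} {c : ℕ → 𝕜} {x : 𝕜} {r : ENNReal}

theorem HasFPowerSeriesOnBall.deriv_ofScalars
    (h : HasFPowerSeriesOnBall f (ofScalars 𝕜 c) x r) :
    HasFPowerSeriesOnBall (deriv f) (ofScalars 𝕜 fun k ↦ (k + 1) * c (k + 1)) x r := by
  convert (ContinuousLinearMap.apply 𝕜 𝕜 (1 : 𝕜)).comp_hasFPowerSeriesOnBall h.fderiv using 1
  · rfl
  funext n
  rw [← mkPiRing_coeff_eq (ofScalars 𝕜 _),
    ← mkPiRing_coeff_eq (ContinuousLinearMap.compFormalMultilinearSeries _ _)]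
  congr 1
  change _ = (ofScalars 𝕜 c).derivSeries.coeff n 1
  rw [derivSeries_coeff_one, coeff_ofScalars, coeff_ofScalars, nsmul_eq_mul, cast_succ]

theorem HasFPowerSeriesOnBall.iteratedDeriv_ofScalars
    (h : HasFPowerSeriesOnBall f (ofScalars 𝕜 c) x r) (m : ℕ) :
    HasFPowerSeriesOnBall (iteratedDeriv m f)
      (ofScalars 𝕜 fun k ↦ ((k + 1).ascFactorial m : 𝕜) * c (k + m)) x r := by
  induction m with
  | zero => simpa using h
  | succ m ih =>
    rw [iteratedDeriv_succ]
    convert ih.deriv_ofScalars using 3 with k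
    rw [ascFactorial_succ, ← succ_ascFactorial, add_right_comm k 1 m, ← add_assoc]
    push_cast
    ring

end PowerSeries

theorem factorial_mul_ascPochhammer_eval_natCast_add_one {S : Type*} [Semiring S] (m k : ℕ) :
    (m ! : S) * (ascPochhammer S k).eval ((m : S) + 1) = k ! * (k + 1).ascFactorial m := by
  rw [← cast_add_one, ascPochhammer_nat_eq_natCast_ascFactorial]
  norm_cast
  rw [factorial_mul_ascFactorial, add_comm, factorial_mul_ascFactorial]

namespace Complex

theorem factorial_le_norm_ascPochhammer_eval {w : ℂ} (hw : 1 ≤ w.re) (n : ℕ) :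
    (n ! : ℝ) ≤ ‖(ascPochhammer ℂ n).eval w‖ := by
  induction n with
  | zero => simp
  | succ n ih =>
    have hfactor : (n : ℝ) + 1 ≤ ‖w + n‖ :=
      calc (n : ℝ) + 1 ≤ (w + n).re := by simp only [add_re, natCast_re]; linarith
        _ ≤ ‖w + n‖ := re_le_norm _
    rw [ascPochhammer_succ_eval, norm_mul, factorial_succ, cast_mul, cast_succ, mul_comm]
    exact mul_le_mul ih hfactor (by positivity) (norm_nonneg _)

theorem norm_inv_Gamma_add_natCast_mul_factorial_le {w : ℂ} (hw : 1 ≤ w.re) (n : ℕ) :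
    ‖(Gamma (w + n))⁻¹‖ * n ! ≤ ‖(Gamma w)⁻¹‖ := by
  have hw₀ : 0 < w.re := by linarith
  have hΓ : Gamma (w + n) = Gamma w * (ascPochhammer ℂ n).eval w := by
    rw [← Gamma_add_nat_div_Gamma_eq w fun k hk ↦ ?_,
      mul_div_cancel₀ _ (Gamma_ne_zero_of_re_pos hw₀)]
    have := congrArg re hk
    simp only [neg_re, natCast_re] at this
    linarith [(k.cast_nonneg : (0 : ℝ) ≤ k)]
  rw [hΓ, mul_inv, norm_mul, norm_inv ((ascPochhammer ℂ n).eval w), mul_assoc]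
  exact mul_le_of_le_one_right (norm_nonneg _)
    (inv_mul_le_one_of_le₀ (factorial_le_norm_ascPochhammer_eval hw n) (norm_nonneg _))

theorem exists_factorial_mul_norm_inv_Gamma_le (b : ℝ) :
    ∃ C, ∀ s : ℂ, s.im = b → ∀ n : ℕ, (n : ℝ) + 1 ≤ s.re → n ! * ‖(Gamma s)⁻¹‖ ≤ C := by
  obtain ⟨C, hC⟩ := (isCompact_Icc (a := (1 : ℝ)) (b := 2)).exists_bound_of_continuousOn
    (f := fun x : ℝ ↦ (Gamma (x + b * I))⁻¹)
    (differentiable_one_div_Gamma.continuous.comp (by fun_prop)).continuousOn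
  refine ⟨C, fun s hs n hn ↦ ?_⟩
  -- shift `s` by the integer `j` into the segment `1 ≤ Re w ≤ 2` where `C` bounds `1 / Γ`
  set j := ⌊s.re - 1⌋₊
  have hnj : n ≤ j := Nat.le_floor (by linarith)
  have hj₁ : (j : ℝ) ≤ s.re - 1 := Nat.floor_le (by linarith)
  have hj₂ : s.re - 1 < j + 1 := Nat.lt_floor_add_one _
  have hre : (s - j).re = s.re - j := by simp only [sub_re, natCast_re]
  have hw : ((s - j).re : ℂ) + b * I = s - j := by
    rw [← hs]
    simpa using re_add_im (s - j)
  have hwC : ‖(Gamma (s - j))⁻¹‖ ≤ C := by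
    have := hC (s - j).re ⟨by linarith, by linarith⟩
    rwa [hw] at this
  calc n ! * ‖(Gamma s)⁻¹‖ ≤ j ! * ‖(Gamma s)⁻¹‖ := by gcongr
    _ = ‖(Gamma (s - j + j))⁻¹‖ * j ! := by rw [sub_add_cancel, mul_comm]
    _ ≤ ‖(Gamma (s - j))⁻¹‖ := norm_inv_Gamma_add_natCast_mul_factorial_le (by linarith) j
    _ ≤ C := hwC

theorem tendsto_pow_mul_norm_inv_Gamma {α : ℝ} (hα : 0 < α) (β : ℂ) {R : ℝ} (hR : 1 ≤ R) :
    Tendsto (fun k : ℕ ↦ R ^ k * ‖(Gamma (α * k + β))⁻¹‖) atTop (𝓝 0) := by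
  obtain ⟨C, hC⟩ := exists_factorial_mul_norm_inv_Gamma_le β.im
  -- with `q > 2 / α`: `k / q + 1 ≤ Re (αk + β)` for large `k`, and `R ^ k ≤ R ^ q (R ^ q) ^ (k / q)`
  obtain ⟨q, hq⟩ := exists_nat_gt (2 / α)
  have hq₀ : 0 < q := by exact_mod_cast (div_pos two_pos hα).trans hq
  have hlim : Tendsto (fun k : ℕ ↦ C * R ^ q * ((R ^ q) ^ (k / q) / (k / q) !)) atTop (𝓝 0) := by
    simpa using ((FloorSemiring.tendsto_pow_div_factorial_atTop (R ^ q)).comp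
      (Nat.tendsto_div_const_atTop hq₀.ne')).const_mul (C * R ^ q)
  refine squeeze_zero' (.of_forall fun k ↦ by positivity) ?_ hlim
  filter_upwards [tendsto_natCast_atTop_atTop.eventually_ge_atTop (2 * (1 - β.re) / α)] with k hk
  have hre : ((k / q : ℕ) : ℝ) + 1 ≤ (α * k + β).re := by
    have hkq : ((k / q : ℕ) : ℝ) ≤ α * k / 2 := by
      refine Nat.cast_div_le.trans ?_
      rw [div_le_iff₀ (by exact_mod_cast hq₀)]
      rw [div_lt_iff₀ hα] at hq
      nlinarith [(k.cast_nonneg : (0 : ℝ) ≤ k)]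
    rw [div_le_iff₀ hα] at hk
    simp only [add_re, mul_re, ofReal_re, natCast_re, ofReal_im, natCast_im, mul_zero, sub_zero]
    linarith
  have hΓ : ‖(Gamma (α * k + β))⁻¹‖ ≤ C / (k / q) ! := by
    rw [le_div_iff₀ (by positivity), mul_comm]
    exact hC _ (by simp) _ hre
  have hpow : R ^ k ≤ R ^ q * (R ^ q) ^ (k / q) := by
    rw [← pow_mul, ← pow_add]
    refine pow_le_pow_right₀ hR ?_
    have := Nat.lt_mul_div_succ k hq₀
    rw [mul_add] at this
    omega
  calc R ^ k * ‖(Gamma (α * k + β))⁻¹‖ ≤ R ^ q * (R ^ q) ^ (k / q) * (C / (k / q) !) := by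
        gcongr
    _ = C * R ^ q * ((R ^ q) ^ (k / q) / (k / q) !) := by ring

theorem radius_ofScalars_inv_Gamma {α : ℝ} (hα : 0 < α) (β : ℂ) :
    (ofScalars ℂ fun k : ℕ ↦ (Gamma (α * k + β))⁻¹).radius = ⊤ := by
  refine ENNReal.eq_top_of_forall_nnreal_le fun r ↦ ?_
  calc (r : ENNReal) ≤ (max r 1 : NNReal) := by exact_mod_cast le_max_left r 1
    _ ≤ _ := le_radius_of_tendsto _ (l := 0) <| by
      simpa [mul_comm] using tendsto_pow_mul_norm_inv_Gamma hα β (le_max_right (r : ℝ) 1)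

end Complex

theorem hasFPowerSeriesOnBall_mittagLeffler {α : ℝ} (hα : 0 < α) (β : ℂ) :
    HasFPowerSeriesOnBall (mittagLeffler α β)
      (ofScalars ℂ fun k : ℕ ↦ (Gamma (α * k + β))⁻¹) 0 ⊤ := by
  have h := (ofScalars ℂ fun k : ℕ ↦ (Gamma (α * k + β))⁻¹).hasFPowerSeriesOnBall
    (by rw [radius_ofScalars_inv_Gamma hα β]; exact ENNReal.zero_lt_top)
  rw [radius_ofScalars_inv_Gamma hα β] at h
  convert h using 1
  funext z
  rw [← ofScalarsSum, ofScalars_sum_eq, mittagLeffler]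
  simp_rw [smul_eq_mul, mul_comm]

theorem iteratedDeriv_mittagLeffler (α : ℝ) (hα : 0 < α) (β : ℂ) (m : ℕ) (z : ℂ) :
    iteratedDeriv m (mittagLeffler α β) z
      = (m.factorial : ℂ) * prabhakar (m + 1) α (β + (α : ℂ) * m) z := by
  have hsum := ((hasFPowerSeriesOnBall_mittagLeffler hα β).iteratedDeriv_ofScalars m).hasSum
    (y := z) (by simp)
  rw [zero_add] at hsum
  rw [← hsum.tsum_eq, prabhakar, ← tsum_mul_left]
  refine tsum_congr fun k ↦ ?_
  have hΓ : (α : ℂ) * ((k + m : ℕ) : ℂ) + β = α * k + (β + α * m) := by push_cast; ring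
  rw [ofScalars_apply_eq, smul_eq_mul, hΓ, ← mul_assoc, ← mul_assoc,
    factorial_mul_ascPochhammer_eval_natCast_add_one]
  have hk : (k ! : ℂ) ≠ 0 := cast_ne_zero.2 k.factorial_ne_zero
  field_simp
end

section
/- Let B = [[0,1,0,0],[0,0,1,0],[0,0,0,1],[0,0,0,p]] with p ≠ 0. Then E_{1/2,1/2}(B) = ∑_{k=0}^∞ B^k / Γ((k+1)/2) equals the upper-triangular matrix with rows: (1/√π, 1, 2/√π, p^{−3}E_{1/2,1/2}(p) − 1/(p³√π) − 1/p² − 2/(p√π)), (0, 1/√π, 1, p^{−2}E_{1/2,1/2}(p) − 1/(p²√π) − 1/p), (0, 0, 1/√π, p^{−1}E_{1/2,1/2}(p) − 1/(p√π)), (0, 0, 0, E_{1/2,1/2}(p)). -/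
open scoped Real

/-- The matrix Mittag-Leffler function `E_{α,β}(A) = ∑ A^k / Γ(αk+β)`. -/
noncomputable def mittagLefflerMatrix {n : ℕ} (α : ℝ) (β : ℂ)
    (A : Matrix (Fin n) (Fin n) ℂ) : Matrix (Fin n) (Fin n) ℂ :=
  ∑' k : ℕ, (Complex.Gamma ((α : ℂ) * k + β))⁻¹ • A ^ k

/-! The matrix `B` satisfies `B ^ (k + 3) = p ^ k • B ^ 3`, so its Mittag-Leffler series collapses to
`c₀ • 1 + c₁ • B + c₂ • B ^ 2 + S • B ^ 3` with `cₖ = Γ((k + 1) / 2)⁻¹` and `S = ∑ cₖ₊₃ pᵏ`.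
Splitting the scalar series at the same place gives `E(p) = c₀ + c₁ p + c₂ p² + S p³`, and for
`p ≠ 0` this expresses `S` through `E(p)`. The scalar series converges for every `z`: its odd
terms are `z ^ (2m + 1) / m!`, and its even terms are controlled by `Γ(m + 1/2) ≥ √π m! / 2 ^ m`. -/

open scoped Nat
open Finset

noncomputable def mittagLefflerCoeff (α : ℝ) (β : ℂ) (k : ℕ) : ℂ :=
  (Complex.Gamma ((α : ℂ) * k + β))⁻¹

theorem mittagLeffler_eq_tsum_smul (α : ℝ) (β z : ℂ) :
    mittagLeffler α β z = ∑' k, mittagLefflerCoeff α β k • z ^ k := by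
  simp_rw [smul_eq_mul, mul_comm (mittagLefflerCoeff α β _)]
  rfl

section PowSucc

variable {𝕜 R : Type*} [CommSemiring 𝕜] {A : R} {p : 𝕜} {n : ℕ}

theorem pow_add_eq_pow_smul_of_pow_succ_eq_smul [Semiring R] [Algebra 𝕜 R]
    (h : A ^ (n + 1) = p • A ^ n) (k : ℕ) : A ^ (k + n) = p ^ k • A ^ n := by
  induction k with
  | zero => simp
  | succ k ih =>
    rw [add_right_comm, pow_succ, ih, smul_mul_assoc, ← pow_succ, h, smul_smul, ← pow_succ]

theorem hasSum_smul_pow_of_pow_succ_eq_smul [TopologicalSpace 𝕜] [Ring R] [Algebra 𝕜 R]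
    [TopologicalSpace R] [IsTopologicalAddGroup R] [ContinuousSMul 𝕜 R]
    (h : A ^ (n + 1) = p • A ^ n) {c : ℕ → 𝕜} {S : 𝕜}
    (hS : HasSum (fun k => c (k + n) * p ^ k) S) :
    HasSum (fun k => c k • A ^ k) (∑ k ∈ range n, c k • A ^ k + S • A ^ n) := by
  rw [← hasSum_nat_add_iff' n, add_sub_cancel_left]
  simp_rw [pow_add_eq_pow_smul_of_pow_succ_eq_smul h, smul_smul]
  exact hS.smul_const _

end PowSucc

theorem Summable.nat_add_mul_pow {𝕜 : Type*} [Field 𝕜] [TopologicalSpace 𝕜] [IsTopologicalRing 𝕜]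
    {c : ℕ → 𝕜} {p : 𝕜} (h : Summable fun k => c k * p ^ k) (hp : p ≠ 0) (n : ℕ) :
    Summable fun k => c (k + n) * p ^ k := by
  refine (((summable_nat_add_iff n).2 h).mul_right (p ^ n)⁻¹).congr fun k => ?_
  rw [pow_add, ← mul_assoc, mul_inv_cancel_right₀ (pow_ne_zero n hp)]

section CornerShift

variable {R : Type*} [CommRing R]

def cornerShift (p : R) : Matrix (Fin 4) (Fin 4) R :=
  !![0, 1, 0, 0; 0, 0, 1, 0; 0, 0, 0, 1; 0, 0, 0, p]

theorem cornerShift_sq (p : R) :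
    cornerShift p ^ 2 = !![0, 0, 1, 0; 0, 0, 0, 1; 0, 0, 0, p; 0, 0, 0, p ^ 2] := by
  ext i j
  fin_cases i <;> fin_cases j <;> simp [cornerShift, sq, Matrix.mul_apply, Fin.sum_univ_four]

theorem cornerShift_pow_three (p : R) :
    cornerShift p ^ 3 = !![0, 0, 0, 1; 0, 0, 0, p; 0, 0, 0, p ^ 2; 0, 0, 0, p ^ 3] := by
  ext i j
  fin_cases i <;> fin_cases j <;>
    simp [cornerShift, pow_succ, Matrix.mul_apply, Fin.sum_univ_four]

theorem cornerShift_pow_four (p : R) : cornerShift p ^ (3 + 1) = p • cornerShift p ^ 3 := by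
  rw [pow_succ, cornerShift_pow_three]
  ext i j
  fin_cases i <;> fin_cases j <;> simp [cornerShift, Matrix.mul_apply, Fin.sum_univ_four] <;> ring

end CornerShift

theorem mittagLefflerCoeff_half_half_two_mul (m : ℕ) :
    mittagLefflerCoeff (1 / 2) (1 / 2) (2 * m) = ((Real.Gamma (m + 1 / 2))⁻¹ : ℝ) := by
  rw [mittagLefflerCoeff, Complex.ofReal_inv, ← Complex.Gamma_ofReal]
  push_cast
  ring_nf

theorem mittagLefflerCoeff_half_half_two_mul_add_one (m : ℕ) :
    mittagLefflerCoeff (1 / 2) (1 / 2) (2 * m + 1) = (m ! : ℂ)⁻¹ := by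
  rw [mittagLefflerCoeff, ← Complex.Gamma_nat_eq_factorial]
  push_cast
  ring_nf

theorem mittagLefflerCoeff_half_half_zero :
    mittagLefflerCoeff (1 / 2) (1 / 2) 0 = 1 / (√π : ℂ) := by
  have h := mittagLefflerCoeff_half_half_two_mul 0
  rw [Real.Gamma_nat_add_half 0] at h
  simpa using h

theorem mittagLefflerCoeff_half_half_one : mittagLefflerCoeff (1 / 2) (1 / 2) 1 = 1 := by
  simpa using mittagLefflerCoeff_half_half_two_mul_add_one 0

theorem mittagLefflerCoeff_half_half_two :
    mittagLefflerCoeff (1 / 2) (1 / 2) 2 = 2 / (√π : ℂ) := by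
  have h := mittagLefflerCoeff_half_half_two_mul 1
  rw [Real.Gamma_nat_add_half 1] at h
  simpa using h

theorem sqrt_pi_mul_factorial_div_two_pow_le_Gamma (m : ℕ) :
    √π * m ! / 2 ^ m ≤ Real.Gamma (m + 1 / 2) := by
  induction m with
  | zero => simp [-one_div, Real.Gamma_one_half_eq]
  | succ m ih =>
    have hΓ : 0 ≤ Real.Gamma (m + 1 / 2) := (Real.Gamma_pos_of_pos (by positivity)).le
    calc √π * (m + 1)! / 2 ^ (m + 1) = (m + 1) / 2 * (√π * m ! / 2 ^ m) := by
          push_cast [Nat.factorial_succ]; ring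
      _ ≤ (m + 1 / 2) * Real.Gamma (m + 1 / 2) := by gcongr; linarith
      _ = Real.Gamma ((m + 1 : ℕ) + 1 / 2) := by
          rw [← Real.Gamma_add_one (by positivity)]; push_cast; ring_nf

theorem summable_mittagLeffler_half_half (z : ℂ) :
    Summable fun k => mittagLefflerCoeff (1 / 2) (1 / 2) k * z ^ k := by
  apply Summable.even_add_odd
  · refine Summable.of_norm_bounded ((Real.summable_pow_div_factorial (2 * ‖z‖ ^ 2)).div_const √π)
      fun m => ?_
    have hΓ := sqrt_pi_mul_factorial_div_two_pow_le_Gamma m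
    rw [mittagLefflerCoeff_half_half_two_mul, norm_mul, norm_pow, Complex.norm_real,
      Real.norm_of_nonneg (inv_nonneg.2 (by linarith [show 0 < √π * m ! / 2 ^ m by positivity]))]
    calc (Real.Gamma (m + 1 / 2))⁻¹ * ‖z‖ ^ (2 * m)
        ≤ (√π * m ! / 2 ^ m)⁻¹ * ‖z‖ ^ (2 * m) := by gcongr
      _ = (2 * ‖z‖ ^ 2) ^ m / m ! / √π := by
          rw [pow_mul, mul_pow]; field_simp
  · refine Summable.of_norm_bounded ((Real.summable_pow_div_factorial (‖z‖ ^ 2)).mul_left ‖z‖)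
      fun m => le_of_eq ?_
    rw [mittagLefflerCoeff_half_half_two_mul_add_one, norm_mul, norm_pow, norm_inv,
      Complex.norm_natCast, pow_succ', pow_mul]
    ring

theorem mittagLefflerMatrix_half_half (p : ℂ) (hp : p ≠ 0) :
    mittagLefflerMatrix (1 / 2) (1 / 2)
      (!![0, 1, 0, 0;
          0, 0, 1, 0;
          0, 0, 0, 1;
          0, 0, 0, p] : Matrix (Fin 4) (Fin 4) ℂ)
    = !![1 / (Real.sqrt π : ℂ), 1, 2 / (Real.sqrt π : ℂ),
           p⁻¹ ^ 3 * mittagLeffler (1 / 2) (1 / 2) p - 1 / (p ^ 3 * (Real.sqrt π : ℂ))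
             - 1 / p ^ 2 - 2 / (p * (Real.sqrt π : ℂ));
         0, 1 / (Real.sqrt π : ℂ), 1,
           p⁻¹ ^ 2 * mittagLeffler (1 / 2) (1 / 2) p - 1 / (p ^ 2 * (Real.sqrt π : ℂ)) - 1 / p;
         0, 0, 1 / (Real.sqrt π : ℂ),
           p⁻¹ * mittagLeffler (1 / 2) (1 / 2) p - 1 / (p * (Real.sqrt π : ℂ));
         0, 0, 0, mittagLeffler (1 / 2) (1 / 2) p] := by
  obtain ⟨S, hS⟩ := (summable_mittagLeffler_half_half p).nat_add_mul_pow hp 3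
  have hE := (hasSum_smul_pow_of_pow_succ_eq_smul (pow_succ' p 3) hS).tsum_eq
  rw [← mittagLeffler_eq_tsum_smul] at hE
  refine (hasSum_smul_pow_of_pow_succ_eq_smul (cornerShift_pow_four p) hS).tsum_eq.trans ?_
  simp only [hE, sum_range_succ, sum_range_zero, cornerShift_sq, cornerShift_pow_three,
    mittagLefflerCoeff_half_half_zero, mittagLefflerCoeff_half_half_one,
    mittagLefflerCoeff_half_half_two]
  ext i j
  fin_cases i <;> fin_cases j <;> simp [cornerShift] <;> field_simp <;> ring
end

section
/- Let J be an m×m Jordan block with eigenvalue λ (λ on the diagonal, 1 on the superdiagonal). Then E_{α,β}(J) is upper triangular with (i,j)-entry equal to E^{j−i+1}_{α, β+(j−i)α}(λ) for j ≥ i and 0 for j < i. -/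
/-- The `m × m` Jordan block with eigenvalue `λ`. -/
def jordanBlock (m : ℕ) (lam : ℂ) : Matrix (Fin m) (Fin m) ℂ :=
  Matrix.of fun i j => if (j : ℕ) = (i : ℕ) then lam
    else if (j : ℕ) = (i : ℕ) + 1 then 1 else 0

/-!
Writing `J = N + λ • 1` with `N` the nilpotent shift, the binomial theorem gives
`(J ^ k) i j = C(k, j - i) λ ^ (k - (j - i))` for `i ≤ j`. Substituting `k = n + (j - i)` in the
`(i, j)` entry of `∑ J ^ k / Γ(αk + β)` and using `(d + 1)_n = n! C(n + d, d)` turns it into the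
Prabhakar series. The entrywise series converge because on a horizontal line
`‖1 / Γ(z)‖ ≤ M / ⌊Re z - 1⌋!` (the recursion `Γ(z + 1) = z Γ(z)` from a compact segment), and
factorial decay beats the polynomial-times-geometric growth of the remaining factors.
-/

open Complex Nat

section Shift

variable (R : Type*) [Semiring R] (m : ℕ)

def shiftMatrix : Matrix (Fin m) (Fin m) R :=
  Matrix.of fun i j => if (j : ℕ) = i + 1 then 1 else 0

variable {R m}

lemma shiftMatrix_pow_apply (l : ℕ) (i j : Fin m) :
    (shiftMatrix R m ^ l) i j = if (j : ℕ) = i + l then 1 else 0 := by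
  induction l generalizing j with
  | zero => simp [Matrix.one_apply, Fin.ext_iff, eq_comm]
  | succ l ih =>
    rw [pow_succ, Matrix.mul_apply]
    simp only [ih]
    simp only [shiftMatrix, Matrix.of_apply, ite_zero_mul_ite_zero, mul_one]
    by_cases h : (i : ℕ) + l < m
    · rw [Finset.sum_eq_single ⟨i + l, h⟩]
      · simp [← add_assoc]
      · intro x _ hx
        rw [if_neg]
        exact fun hc => hx (Fin.ext hc.1)
      · simp
    · rw [Finset.sum_eq_zero, if_neg]
      · omega
      · intro x _
        rw [if_neg]
        omega

end Shift

lemma jordanBlock_eq_shiftMatrix_add (m : ℕ) (lam : ℂ) :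
    jordanBlock m lam = shiftMatrix ℂ m + lam • 1 := by
  ext i j
  simp only [jordanBlock, shiftMatrix, Matrix.add_apply, Matrix.smul_apply, Matrix.one_apply,
    Matrix.of_apply, Fin.ext_iff, smul_eq_mul, mul_ite, mul_one, mul_zero]
  split_ifs <;> first | omega | simp

lemma jordanBlock_pow_apply (m : ℕ) (lam : ℂ) (k : ℕ) (i j : Fin m) :
    (jordanBlock m lam ^ k) i j =
      if i ≤ j then (k.choose (j - i : ℕ) : ℂ) * lam ^ (k - (j - i : ℕ)) else 0 := by
  have hc : Commute (shiftMatrix ℂ m) (lam • 1) := (Commute.one_right _).smul_right lam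
  rw [jordanBlock_eq_shiftMatrix_add, hc.add_pow, Matrix.sum_apply]
  simp only [smul_pow, one_pow, Matrix.mul_smul, mul_one, ← nsmul_eq_mul', Matrix.smul_apply,
    shiftMatrix_pow_apply, smul_eq_mul, nsmul_eq_mul, mul_ite, mul_one, mul_zero]
  rw [Finset.sum_eq_single (j - i : ℕ)]
  · exact if_congr (by rw [Fin.le_def]; omega) rfl rfl
  · intro l _ hl
    rw [if_neg (by omega)]
  · intro hl
    rw [Nat.choose_eq_zero_of_lt (by simp at hl; omega)]
    simp

lemma exists_norm_inv_Gamma_le_div_factorial (y : ℝ) :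
    ∃ M : ℝ, ∀ z : ℂ, z.im = y → 1 ≤ z.re → ‖(Gamma z)⁻¹‖ ≤ M / ⌊z.re - 1⌋₊ ! := by
  have hseg : IsCompact ((fun x : ℝ => x + y * I) '' Set.Icc 1 2) :=
    isCompact_Icc.image (by fun_prop)
  obtain ⟨M, hM⟩ :=
    hseg.exists_bound_of_continuousOn differentiable_one_div_Gamma.continuous.continuousOn
  refine ⟨M, fun z hzy hz1 => ?_⟩
  suffices band : ∀ N : ℕ, ∀ z : ℂ, z.im = y → N + 1 ≤ z.re → z.re < N + 2 →
      ‖(Gamma z)⁻¹‖ ≤ M / N.factorial by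
    have := Nat.lt_floor_add_one (z.re - 1)
    exact band _ z hzy (by linarith [Nat.floor_le (by linarith : 0 ≤ z.re - 1)]) (by linarith)
  intro N
  induction N with
  | zero =>
    intro z hzy hz1 hz2
    have hz : z ∈ (fun x : ℝ => x + y * I) '' Set.Icc 1 2 :=
      ⟨z.re, ⟨by simpa using hz1, by simp at hz2; linarith⟩, by apply Complex.ext <;> simp [hzy]⟩
    simpa using hM z hz
  | succ N ih =>
    intro z hzy hz1 hz2
    push_cast at hz1 hz2
    have hz1' : (N : ℝ) + 1 ≤ (z - 1).re := by simp; linarith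
    have hnorm : (N : ℝ) + 1 ≤ ‖z - 1‖ := hz1'.trans (re_le_norm _)
    have hne : z - 1 ≠ 0 := norm_pos_iff.mp (lt_of_lt_of_le (by positivity) hnorm)
    have hrec := ih (z - 1) (by simpa using hzy) hz1' (by simp; linarith)
    calc ‖(Gamma z)⁻¹‖ = ‖z - 1‖⁻¹ * ‖(Gamma (z - 1))⁻¹‖ := by
          conv_lhs => rw [← sub_add_cancel z 1, Gamma_add_one _ hne]
          rw [mul_inv, norm_mul, norm_inv]
      _ ≤ ((N : ℝ) + 1)⁻¹ * (M / N !) :=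
          mul_le_mul (inv_anti₀ (by positivity) hnorm) hrec (norm_nonneg _) (by positivity)
      _ = M / (N + 1) ! := by
          rw [Nat.factorial_succ]; push_cast; field_simp

lemma inv_factorial_floor_le_exp_mul_rpow {R : ℝ} (hR : 1 ≤ R) (x : ℝ) :
    ((⌊x⌋₊ ! : ℝ))⁻¹ ≤ Real.exp R * R ^ (1 - x) := by
  have hR0 : 0 < R := by linarith
  have hpow : R ^ (x - 1) ≤ R ^ ⌊x⌋₊ := by
    rw [← Real.rpow_natCast]
    exact Real.rpow_le_rpow_of_exponent_le hR (Nat.sub_one_lt_floor x).le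
  calc ((⌊x⌋₊ ! : ℝ))⁻¹ = R ^ ⌊x⌋₊ / ⌊x⌋₊ ! * (R ^ ⌊x⌋₊)⁻¹ := by field_simp
    _ ≤ Real.exp R * (R ^ (x - 1))⁻¹ := by
        gcongr
        exact Real.pow_div_factorial_le_exp R hR0.le _
    _ = Real.exp R * R ^ (1 - x) := by rw [← Real.rpow_neg hR0.le, neg_sub]

lemma summable_pow_mul_pow_div_factorial_floor {α : ℝ} (hα : 0 < α) (c r : ℝ) (d : ℕ) :
    Summable fun k : ℕ => (k : ℝ) ^ d * r ^ k / ⌊α * k + c⌋₊ ! := by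
  set R : ℝ := (2 * |r| + 1) ^ α⁻¹
  have hR : 1 ≤ R := Real.one_le_rpow (by linarith [abs_nonneg r]) (by positivity)
  have hRα : R ^ (-α) = (2 * |r| + 1)⁻¹ := by
    rw [Real.rpow_neg (by positivity), Real.rpow_inv_rpow (by positivity) hα.ne']
  have hratio : ‖|r| * (2 * |r| + 1)⁻¹‖ < 1 := by
    rw [Real.norm_of_nonneg (by positivity), ← div_eq_mul_inv, div_lt_one (by positivity)]
    linarith [abs_nonneg r]
  refine .of_norm_bounded
    (((summable_pow_mul_geometric_of_norm_lt_one d hratio).mul_left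
      (Real.exp R * R ^ (1 - c)))) fun k => ?_
  have hbound := inv_factorial_floor_le_exp_mul_rpow hR (α * k + c)
  rw [show 1 - (α * k + c) = (1 - c) + (-α) * k by ring,
    Real.rpow_add (by positivity), Real.rpow_mul (by positivity), hRα, Real.rpow_natCast] at hbound
  rw [norm_div, norm_mul, norm_pow, norm_pow, Real.norm_natCast, Real.norm_natCast,
    Real.norm_eq_abs, div_eq_mul_inv, mul_pow]
  calc (k : ℝ) ^ d * |r| ^ k * ((⌊α * k + c⌋₊ ! : ℝ))⁻¹
      ≤ (k : ℝ) ^ d * |r| ^ k * (Real.exp R * (R ^ (1 - c) * (2 * |r| + 1)⁻¹ ^ k)) := by gcongr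
    _ = _ := by ring

lemma summable_inv_Gamma_mul_choose_mul_pow {α : ℝ} (hα : 0 < α) (β lam : ℂ) (d : ℕ) :
    Summable fun k : ℕ => (Gamma (α * k + β))⁻¹ * (k.choose d * lam ^ (k - d)) := by
  obtain ⟨M, hM⟩ := exists_norm_inv_Gamma_le_div_factorial β.im
  set L := max ‖lam‖ 1
  have hlarge : ∀ᶠ k : ℕ in Filter.atTop, 1 ≤ α * k + β.re :=
    (Filter.tendsto_atTop_add_const_right _ _
      (tendsto_natCast_atTop_atTop.const_mul_atTop hα)).eventually_ge_atTop 1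
  refine .of_norm_bounded_eventually_nat
    ((summable_pow_mul_pow_div_factorial_floor hα (β.re - 1) L d).mul_left M) ?_
  filter_upwards [hlarge] with k hk
  have hGamma : ‖(Gamma (α * k + β))⁻¹‖ ≤ M / ⌊α * k + (β.re - 1)⌋₊ ! := by
    simpa [add_sub_assoc] using hM (α * k + β) (by simp) (by simpa using hk)
  have hchoose : ((k.choose d : ℕ) : ℝ) ≤ (k : ℝ) ^ d := mod_cast Nat.choose_le_pow k d
  have hlam : ‖lam‖ ^ (k - d) ≤ L ^ k :=
    (pow_le_pow_left₀ (norm_nonneg _) (le_max_left _ _) _).trans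
      (pow_le_pow_right₀ (le_max_right _ _) (Nat.sub_le _ _))
  have hM0 : 0 ≤ M / ⌊α * k + (β.re - 1)⌋₊ ! := (norm_nonneg _).trans hGamma
  simp only [norm_mul, norm_pow, norm_natCast]
  calc ‖(Gamma (α * k + β))⁻¹‖ * (k.choose d * ‖lam‖ ^ (k - d))
      ≤ M / ⌊α * k + (β.re - 1)⌋₊ ! * ((k : ℝ) ^ d * L ^ k) := by gcongr
    _ = _ := by ring

lemma ascPochhammer_eval_natCast_add_one (d n : ℕ) :
    (ascPochhammer ℂ n).eval ((d : ℂ) + 1) = n ! * (n + d).choose d := by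
  rw [← Nat.cast_add_one, ascPochhammer_nat_eq_natCast_ascFactorial,
    Nat.ascFactorial_eq_factorial_mul_choose, add_comm d n, ← Nat.choose_symm_add]
  push_cast; ring

lemma tsum_inv_Gamma_mul_choose_mul_pow (α : ℝ) (β lam : ℂ) (d : ℕ) :
    ∑' k : ℕ, (Gamma (α * k + β))⁻¹ * (k.choose d * lam ^ (k - d)) =
      prabhakar (d + 1) α (β + α * d) lam := by
  rw [← (add_left_injective d).tsum_eq, prabhakar]
  · refine tsum_congr fun n => ?_
    rw [Nat.add_sub_cancel, ascPochhammer_eval_natCast_add_one]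
    have hfac : (n ! : ℂ) ≠ 0 := Nat.cast_ne_zero.2 n.factorial_ne_zero
    rw [show (α : ℂ) * (n + d : ℕ) + β = α * n + (β + α * d) by push_cast; ring]
    field_simp
  · intro k hk
    have hdk : d ≤ k := by
      by_contra h
      exact hk (by simp [Nat.choose_eq_zero_of_lt (not_le.mp h)])
    exact ⟨k - d, Nat.sub_add_cancel hdk⟩

lemma mittagLefflerMatrix_apply {n : ℕ} (α : ℝ) (β : ℂ) (A : Matrix (Fin n) (Fin n) ℂ)
    (hA : ∀ i j, Summable fun k : ℕ => (Gamma (α * k + β))⁻¹ * (A ^ k) i j) (i j : Fin n) :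
    mittagLefflerMatrix α β A i j = ∑' k : ℕ, (Gamma (α * k + β))⁻¹ * (A ^ k) i j := by
  have hrow : ∀ a, Summable fun k : ℕ => ((Gamma (α * k + β))⁻¹ • A ^ k) a :=
    fun a => Pi.summable.2 (hA a)
  exact (congrFun (tsum_apply (Pi.summable.2 hrow)) j).trans (tsum_apply (hrow i))

theorem mittagLefflerMatrix_jordanBlock (α : ℝ) (hα : 0 < α) (β : ℂ)
    (m : ℕ) (lam : ℂ) (i j : Fin m) :
    mittagLefflerMatrix α β (jordanBlock m lam) i j
      = if i ≤ j then
          prabhakar (((j : ℕ) - (i : ℕ) : ℕ) + 1) α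
            (β + (α : ℂ) * (((j : ℕ) - (i : ℕ) : ℕ) : ℂ)) lam
        else 0 := by
  have hentry (a b : Fin m) (k : ℕ) :
      (Gamma (α * k + β))⁻¹ * (jordanBlock m lam ^ k) a b =
        if a ≤ b then (Gamma (α * k + β))⁻¹ * ((k.choose (b - a : ℕ)) * lam ^ (k - (b - a : ℕ)))
        else 0 := by
    rw [jordanBlock_pow_apply, mul_ite, mul_zero]
  have hsum (a b : Fin m) :
      Summable fun k : ℕ => (Gamma (α * k + β))⁻¹ * (jordanBlock m lam ^ k) a b := by
    simp only [hentry]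
    split_ifs
    · exact summable_inv_Gamma_mul_choose_mul_pow hα β lam _
    · exact summable_zero
  rw [mittagLefflerMatrix_apply α β _ hsum]
  simp only [hentry]
  split_ifs
  · exact tsum_inv_Gamma_mul_choose_mul_pow α β lam _
  · exact tsum_zero
end
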